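/- Let K be a field and λ ∈ K∖{0,1}. With (Q^(2), W^(2)_λ) the quiver with potential W^(2)_λ = λabc − dgc + dki − afi + jgh − ebh + efl − jkl of tubular type (2,2,2,2;λ), there is a K-algebra isomorphism KQ^(2)/J′(W^(2)_λ) ≅ KQ^(2)/J′(W^(2)_{λ⁻¹}). -/

import Mathlib

/-- A finite quiver: `nV` vertices, `nA` arrows, with source and target maps. -/
structure FQuiver where
  nV : ℕ
  nA : ℕ
  src : Fin nA → Fin nV
  tgt : Fin nA → Fin nV

namespace FQuiver

variable (Q : FQuiver)

/-- Walk along a list of arrows starting at `v`; returns `some w` if the list is a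
composable path ending at `w`, and `none` otherwise. -/
def walk : Fin Q.nV → List (Fin Q.nA) → Option (Fin Q.nV)
  | v, [] => some v
  | v, e :: l => if Q.src e = v then walk (Q.tgt e) l else none

theorem walk_append (v : Fin Q.nV) (l₁ l₂ : List (Fin Q.nA)) :
    Q.walk v (l₁ ++ l₂) = (Q.walk v l₁).bind fun w => Q.walk w l₂ := by
  induction l₁ generalizing v with
  | nil => simp [walk]
  | cons e l ih =>
    simp only [List.cons_append, walk]
    split
    · exact ih _
    · rfl

/-- A path in `Q`: a pair of endpoints together with a composable list of arrows. -/
abbrev FPath (Q : FQuiver) : Type :=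
  { x : (Fin Q.nV × Fin Q.nV) × List (Fin Q.nA) // Q.walk x.1.1 x.2 = some x.1.2 }

/-- The trivial path `e_v` at a vertex `v`. -/
def idPath (v : Fin Q.nV) : Q.FPath := ⟨((v, v), []), rfl⟩

/-- The path consisting of a single arrow `e`. -/
def arrowPath (e : Fin Q.nA) : Q.FPath :=
  ⟨((Q.src e, Q.tgt e), [e]), by simp [walk]⟩

/-- The basis monoid of the path algebra: paths, together with a formal unit `one`
and a formal absorbing element `zero` (products of non-composable paths). -/
inductive PM (Q : FQuiver) : Type
  | zero : PM Q
  | one : PM Q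
  | p : Q.FPath → PM Q

/-- Multiplication of (formal) paths: concatenation when composable, `zero` otherwise. -/
def pmMul : PM Q → PM Q → PM Q
  | .zero, _ => .zero
  | .one, y => y
  | .p _, .zero => .zero
  | .p x, .one => .p x
  | .p x, .p y =>
    if h : x.1.1.2 = y.1.1.1 then
      .p ⟨((x.1.1.1, y.1.1.2), x.1.2 ++ y.1.2), by
        rw [Q.walk_append, x.2, Option.bind_some, h]; exact y.2⟩
    else .zero

theorem pmMul_one (m : PM Q) : Q.pmMul m .one = m := by cases m <;> rfl

theorem pmMul_zero (m : PM Q) : Q.pmMul m .zero = .zero := by cases m <;> rfl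

instance : Monoid (PM Q) where
  mul := Q.pmMul
  one := .one
  one_mul _ := rfl
  mul_one := Q.pmMul_one
  mul_assoc x y z := by
    show Q.pmMul (Q.pmMul x y) z = Q.pmMul x (Q.pmMul y z)
    cases x with
    | zero => rfl
    | one => rfl
    | p px =>
      cases y with
      | zero => rfl
      | one => rfl
      | p py =>
        cases z with
        | zero => simp only [pmMul_zero]
        | one => simp only [pmMul_one]
        | p pz =>
          obtain ⟨⟨⟨a, b⟩, lx⟩, hx⟩ := px
          obtain ⟨⟨⟨c, d⟩, ly⟩, hy⟩ := py
          obtain ⟨⟨⟨e, f⟩, lz⟩, hz⟩ := pz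
          by_cases h1 : b = c <;> by_cases h2 : d = e <;>
            simp [pmMul, h1, h2, List.append_assoc]

end FQuiver

namespace FQuiver

variable (Q : FQuiver) (K : Type) [Field K]

/-- The basis element of the path algebra given by a list of arrows starting at `v`:
the corresponding path if the list is composable, and `0` otherwise. -/
noncomputable def mkPath (v : Fin Q.nV) (l : List (Fin Q.nA)) :
    MonoidAlgebra K (PM Q) :=
  match h : Q.walk v l with
  | none => 0
  | some w => MonoidAlgebra.single (.p ⟨((v, w), l), h⟩) 1

/-- Cyclic derivative of a basis word with respect to an arrow `a`:
`∂ₐ(a₁⋯a_d) = Σ_{p : a_p = a} a_{p+1}⋯a_d a₁⋯a_{p−1}`. -/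
noncomputable def cycDerWord (a : Fin Q.nA) : PM Q → MonoidAlgebra K (PM Q)
  | .p x =>
    ∑ i ∈ Finset.range x.1.2.length,
      if x.1.2[i]? = some a then
        Q.mkPath K (Q.tgt a) (x.1.2.drop (i + 1) ++ x.1.2.take i)
      else 0
  | _ => 0

/-- The cyclic derivative `∂ₐ`, extended `K`-linearly. -/
noncomputable def cycDer (a : Fin Q.nA) (W : MonoidAlgebra K (PM Q)) :
    MonoidAlgebra K (PM Q) :=
  W.coeff.sum fun m c => c • Q.cycDerWord K a m

/-- A word is an oriented cycle if it is a nonempty path with equal endpoints. -/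
def IsCycleWord : PM Q → Prop
  | .p x => x.1.1.1 = x.1.1.2 ∧ x.1.2 ≠ []
  | _ => False

/-- A (finite) potential: a `K`-linear combination of oriented cycles. -/
def IsPotential (W : MonoidAlgebra K (PM Q)) : Prop :=
  ∀ m ∈ W.coeff.support, Q.IsCycleWord m

/-- The defining relations of the path algebra `KQ` as a quotient of the monoid algebra
of the path monoid: the formal absorbing element is `0`, and the identity is the sum of
the trivial paths `e_v`. -/
inductive pathRel : MonoidAlgebra K (PM Q) → MonoidAlgebra K (PM Q) → Prop
  | zero : pathRel (MonoidAlgebra.single .zero 1) 0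
  | one : pathRel (MonoidAlgebra.single .one 1)
      (∑ v : Fin Q.nV, MonoidAlgebra.single (.p (Q.idPath v)) 1)

/-- The path algebra `KQ` of a finite quiver `Q`. -/
abbrev PathAlg : Type := RingQuot (Q.pathRel K)

/-- The canonical projection from the monoid algebra onto the path algebra. -/
noncomputable def pathMk : MonoidAlgebra K (PM Q) →ₐ[K] Q.PathAlg K :=
  RingQuot.mkAlgHom K (Q.pathRel K)

/-- The Jacobian ideal `J′(W)`: the two-sided ideal of the path algebra `KQ` generated
by the cyclic derivatives `∂ₐW` for all arrows `a`. -/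
noncomputable def jacIdeal (W : MonoidAlgebra K (PM Q)) : TwoSidedIdeal (Q.PathAlg K) :=
  TwoSidedIdeal.span (Set.range fun a : Fin Q.nA => Q.pathMk K (Q.cycDer K a W))

/-- The defining relations of the Jacobian algebra `KQ/J′(W)`: the path algebra
relations together with the vanishing of all cyclic derivatives `∂ₐW`. -/
inductive jacRel (W : MonoidAlgebra K (PM Q)) :
    MonoidAlgebra K (PM Q) → MonoidAlgebra K (PM Q) → Prop
  | zero : jacRel W (MonoidAlgebra.single .zero 1) 0
  | one : jacRel W (MonoidAlgebra.single .one 1)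
      (∑ v : Fin Q.nV, MonoidAlgebra.single (.p (Q.idPath v)) 1)
  | der (a : Fin Q.nA) : jacRel W (Q.cycDer K a W) 0

/-- The Jacobian algebra `KQ/J′(W)`. -/
abbrev JacAlg (W : MonoidAlgebra K (PM Q)) : Type := RingQuot (Q.jacRel K W)

/-- The canonical projection onto the Jacobian algebra. -/
noncomputable def jacMk (W : MonoidAlgebra K (PM Q)) :
    MonoidAlgebra K (PM Q) →ₐ[K] Q.JacAlg K W :=
  RingQuot.mkAlgHom K (Q.jacRel K W)

end FQuiver

open FQuiver

/-- The quiver `Q⁽²⁾` of tubular type `(2,2,2,2;λ)`: 6 vertices (top row `1,2,3` are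
indices `0,1,2`, bottom row `4,5,6` are indices `3,4,5`) and 12 arrows
`a : 2→1, b : 3→2, c : 1→3, d : 5→1, e : 2→4, f : 6→2, g : 3→5, h : 4→3, i : 1→6,
j : 5→4, k : 6→5, l : 4→6` (arrows `a,…,l` are indices `0,…,11`). -/
abbrev Q2 : FQuiver where
  nV := 6
  nA := 12
  src := ![1, 2, 0, 4, 1, 5, 2, 3, 0, 4, 5, 3]
  tgt := ![0, 1, 2, 0, 3, 1, 4, 2, 5, 3, 4, 5]

/-- The potential `W⁽²⁾_λ = λabc − dgc + dki − afi + jgh − ebh + efl − jkl`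
(each monomial an oriented 3-cycle, written as a composable list of arrows). -/
noncomputable def W2 (K : Type) [Field K] (lam : K) : MonoidAlgebra K (PM Q2) :=
  lam • Q2.mkPath K 0 [2, 1, 0] - Q2.mkPath K 0 [2, 6, 3] + Q2.mkPath K 0 [8, 10, 3]
    - Q2.mkPath K 0 [8, 5, 0] + Q2.mkPath K 2 [6, 9, 7] - Q2.mkPath K 3 [7, 1, 4]
    + Q2.mkPath K 3 [11, 5, 4] - Q2.mkPath K 3 [11, 10, 9]

/-- The idempotent `e_v` of the Jacobian algebra `KQ⁽²⁾/J′(W⁽²⁾_λ)`. -/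
noncomputable def eps2 (K : Type) [Field K] (lam : K) (v : Fin 6) :
    Q2.JacAlg K (W2 K lam) :=
  Q2.jacMk K (W2 K lam) (MonoidAlgebra.single (PM.p (Q2.idPath v)) 1)

/-- The `(v,w)`-component `e_v·A·e_w` of the Jacobian algebra `A = KQ⁽²⁾/J′(W⁽²⁾_λ)`;
its dimension is the `w`-entry of the dimension vector of the indecomposable projective
module at the vertex `v`. -/
noncomputable def projComp2 (K : Type) [Field K] (lam : K) (v w : Fin 6) :
    Submodule K (Q2.JacAlg K (W2 K lam)) :=
  LinearMap.range
    ((LinearMap.mulLeft K (eps2 K lam v)).comp (LinearMap.mulRight K (eps2 K lam w)))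

/-!
The involution of `Q⁽²⁾` exchanging its two rows (`a ↔ j, b ↔ k, c ↔ l, d ↔ e, f ↔ g, h ↔ i`),
followed by rescaling `b` and `j` by `λ⁻¹` and `h` by `λ`, sends `W⁽²⁾_λ` to `-W⁽²⁾_{λ⁻¹}` up to
rotation of two of its cycles, and rotations do not change cyclic derivatives. A rescaled
automorphism `ψ` with scales `c` satisfies `∂_{ψ a}(ψ W) = c_a · ψ(∂_a W)`, so it carries the
Jacobian relations of `W` to those of `W⁽²⁾_{λ⁻¹}`; its inverse is again a rescaled automorphism,
which gives the inverse isomorphism.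
-/

theorem List.prod_map_eq_mul_prod_map_drop_append_take {α M : Type*} [CommMonoid M] (f : α → M)
    {l : List α} {i : ℕ} {a : α} (h : l[i]? = some a) :
    (l.map f).prod = f a * ((l.drop (i + 1) ++ l.take i).map f).prod := by
  obtain ⟨hi, rfl⟩ := List.getElem?_eq_some_iff.1 h
  conv_lhs => rw [← List.take_append_drop i l, List.drop_eq_getElem_cons hi]
  simp only [List.map_append, List.map_cons, List.prod_append, List.prod_cons]
  rw [mul_left_comm, mul_comm (List.map f (List.take i l)).prod]

namespace FQuiver

variable {Q : FQuiver}

def FPath.comp (x y : Q.FPath) (h : x.1.1.2 = y.1.1.1) : Q.FPath :=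
  ⟨((x.1.1.1, y.1.1.2), x.1.2 ++ y.1.2), by rw [Q.walk_append, x.2, Option.bind_some, h]; exact y.2⟩

theorem PM.p_mul_p_of_eq {x y : Q.FPath} (h : x.1.1.2 = y.1.1.1) :
    (PM.p x * PM.p y : PM Q) = .p (x.comp y h) :=
  dif_pos h

theorem PM.p_mul_p_of_ne {x y : Q.FPath} (h : x.1.1.2 ≠ y.1.1.1) :
    (PM.p x * PM.p y : PM Q) = .zero :=
  dif_neg h

theorem PM.mul_zero (m : PM Q) : m * (.zero : PM Q) = .zero := Q.pmMul_zero m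

def weight {M : Type*} [CommMonoid M] (c : Fin Q.nA → M) : PM Q → M
  | .p x => (x.1.2.map c).prod
  | _ => 1

@[simp] theorem weight_one {M : Type*} [CommMonoid M] (c : Fin Q.nA → M) :
    weight c (1 : PM Q) = 1 :=
  rfl

theorem weight_mul {M : Type*} [CommMonoid M] (c : Fin Q.nA → M) {m n : PM Q}
    (h : m * n ≠ .zero) : weight c (m * n) = weight c m * weight c n := by
  match m, n with
  | .zero, _ => exact absurd rfl h
  | .one, n => exact (one_mul _).symm
  | .p x, .zero => exact absurd (PM.mul_zero _) h
  | .p x, .one => exact (mul_one _).symm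
  | .p x, .p y =>
    by_cases hxy : x.1.1.2 = y.1.1.1
    · rw [PM.p_mul_p_of_eq hxy]
      simp only [weight, FPath.comp, List.map_append, List.prod_append]
    · exact absurd (PM.p_mul_p_of_ne hxy) h

theorem weight_inv {G : Type*} [CommGroup G] (c : Fin Q.nA → G) (m : PM Q) :
    weight c⁻¹ m = (weight c m)⁻¹ := by
  cases m with
  | p x => simp only [weight, List.prod_inv, List.map_map]; rfl
  | _ => simp [weight]

structure Aut (Q : FQuiver) where
  arrow : Fin Q.nA ≃ Fin Q.nA
  vertex : Fin Q.nV ≃ Fin Q.nV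
  src_arrow (e : Fin Q.nA) : Q.src (arrow e) = vertex (Q.src e)
  tgt_arrow (e : Fin Q.nA) : Q.tgt (arrow e) = vertex (Q.tgt e)

namespace Aut

variable (φ : Q.Aut)

def symm : Q.Aut where
  arrow := φ.arrow.symm
  vertex := φ.vertex.symm
  src_arrow e := φ.vertex.eq_symm_apply.2 (by rw [← φ.src_arrow, Equiv.apply_symm_apply])
  tgt_arrow e := φ.vertex.eq_symm_apply.2 (by rw [← φ.tgt_arrow, Equiv.apply_symm_apply])

theorem walk_map (v : Fin Q.nV) (l : List (Fin Q.nA)) :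
    Q.walk (φ.vertex v) (l.map φ.arrow) = (Q.walk v l).map φ.vertex := by
  induction l generalizing v with
  | nil => rfl
  | cons e l ih =>
    simp only [List.map_cons, walk, φ.src_arrow, φ.vertex.apply_eq_iff_eq, φ.tgt_arrow, ih]
    split <;> rfl

def mapPath (x : Q.FPath) : Q.FPath :=
  ⟨((φ.vertex x.1.1.1, φ.vertex x.1.1.2), x.1.2.map φ.arrow), by rw [walk_map, x.2]; rfl⟩

def mapPM : PM Q →* PM Q where
  toFun
    | .p x => .p (φ.mapPath x)
    | m => m
  map_one' := rfl
  map_mul' m n := by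
    match m, n with
    | .zero, _ => rfl
    | .one, _ => rfl
    | .p x, .zero => rfl
    | .p x, .one => rfl
    | .p x, .p y =>
      by_cases hxy : x.1.1.2 = y.1.1.1
      · have hxy' : (φ.mapPath x).1.1.2 = (φ.mapPath y).1.1.1 := congrArg φ.vertex hxy
        rw [PM.p_mul_p_of_eq hxy, PM.p_mul_p_of_eq hxy']
        simp [mapPath, FPath.comp]
      · have hxy' : (φ.mapPath x).1.1.2 ≠ (φ.mapPath y).1.1.1 := φ.vertex.injective.ne hxy
        rw [PM.p_mul_p_of_ne hxy, PM.p_mul_p_of_ne hxy']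

@[simp] theorem mapPM_zero : φ.mapPM .zero = .zero := rfl

@[simp] theorem mapPM_one : φ.mapPM .one = .one := rfl

@[simp] theorem mapPM_p (x : Q.FPath) : φ.mapPM (.p x) = .p (φ.mapPath x) := rfl

theorem symm_mapPM_mapPM (m : PM Q) : φ.symm.mapPM (φ.mapPM m) = m := by
  cases m with
  | p x => simp [mapPath, symm, List.map_map]
  | _ => rfl

theorem weight_mapPM {M : Type*} [CommMonoid M] (c : Fin Q.nA → M) (m : PM Q) :
    weight c (φ.mapPM m) = weight (c ∘ φ.arrow) m := by
  cases m with
  | p x => simp [weight, mapPath, List.map_map]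
  | _ => rfl

end Aut

variable {K : Type} [Field K]

open MonoidAlgebra

theorem mkPath_of_walk_eq_some {v w : Fin Q.nV} {l : List (Fin Q.nA)} (h : Q.walk v l = some w) :
    Q.mkPath K v l = single (.p ⟨((v, w), l), h⟩) 1 := by
  unfold mkPath
  split
  · simp_all
  · next w' h' =>
    cases h.symm.trans h'
    rfl

theorem mkPath_of_walk_eq_none {v : Fin Q.nV} {l : List (Fin Q.nA)} (h : Q.walk v l = none) :
    Q.mkPath K v l = 0 := by
  unfold mkPath
  split
  · rfl
  · simp_all

theorem cycDer_eq_constr (a : Fin Q.nA) (W : MonoidAlgebra K (PM Q)) :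
    Q.cycDer K a W = (MonoidAlgebra.basis (PM Q) K).constr K (Q.cycDerWord K a) W := by
  rw [Module.Basis.constr_apply]
  rfl

theorem cycDer_single (a : Fin Q.nA) (m : PM Q) :
    Q.cycDer K a (single m 1) = Q.cycDerWord K a m := by
  rw [cycDer_eq_constr, ← MonoidAlgebra.basis_apply, Module.Basis.constr_basis]

theorem cycDerWord_rotate (a : Fin Q.nA) {x y : Q.FPath} {e : Fin Q.nA} {l : List (Fin Q.nA)}
    (hx : x.1.2 = e :: l) (hy : y.1.2 = l ++ [e]) :
    Q.cycDerWord K a (.p x) = Q.cycDerWord K a (.p y) := by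
  simp only [cycDerWord, hx, hy, List.length_cons, List.length_append, List.length_nil]
  rw [Finset.sum_range_succ', Finset.sum_range_succ]
  congr 1
  · refine Finset.sum_congr rfl fun i hi => ?_
    have hi : i < l.length := Finset.mem_range.1 hi
    rw [List.getElem?_cons_succ, List.drop_succ_cons, List.take_succ_cons,
      List.getElem?_append_left hi, List.drop_append_of_le_length hi,
      List.take_append_of_le_length hi.le, List.append_assoc, List.singleton_append]
  · simp

theorem cycDer_mkPath_rotate (a : Fin Q.nA) {v : Fin Q.nV} {e : Fin Q.nA} {l : List (Fin Q.nA)}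
    (h : Q.walk v (e :: l) = some v) :
    Q.cycDer K a (Q.mkPath K v (e :: l)) = Q.cycDer K a (Q.mkPath K (Q.tgt e) (l ++ [e])) := by
  have h' : Q.walk (Q.tgt e) (l ++ [e]) = some (Q.tgt e) := by
    simp only [walk] at h
    split_ifs at h with he
    rw [walk_append, h]
    simp [walk, he]
  rw [mkPath_of_walk_eq_some h, mkPath_of_walk_eq_some h', cycDer_single, cycDer_single]
  exact cycDerWord_rotate a rfl rfl

theorem jacMk_single_zero (W : MonoidAlgebra K (PM Q)) : Q.jacMk K W (single .zero 1) = 0 :=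
  (RingQuot.mkAlgHom_rel K (jacRel.zero (Q := Q) (W := W))).trans (map_zero _)

theorem jacMk_cycDer (W : MonoidAlgebra K (PM Q)) (a : Fin Q.nA) :
    Q.jacMk K W (Q.cycDer K a W) = 0 :=
  (RingQuot.mkAlgHom_rel K (jacRel.der (Q := Q) (W := W) a)).trans (map_zero _)

theorem sum_jacMk_single_idPath (W : MonoidAlgebra K (PM Q)) :
    ∑ v, Q.jacMk K W (single (.p (Q.idPath v)) 1) = 1 := by
  rw [← map_sum, jacMk, ← RingQuot.mkAlgHom_rel K (jacRel.one (Q := Q) (W := W)),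
    ← map_one (RingQuot.mkAlgHom K _)]
  rfl

structure RescaledAut (Q : FQuiver) (K : Type) [Field K] extends Q.Aut where
  scale : Fin Q.nA → Kˣ

namespace RescaledAut

variable (ψ : Q.RescaledAut K)

def symm : Q.RescaledAut K where
  toAut := ψ.toAut.symm
  scale := (ψ.scale ∘ ψ.arrow.symm)⁻¹

noncomputable def rescale : MonoidAlgebra K (PM Q) →ₗ[K] MonoidAlgebra K (PM Q) :=
  (MonoidAlgebra.basis (PM Q) K).constr K fun m => weight ψ.scale m • single (ψ.mapPM m) 1

theorem rescale_single (m : PM Q) (k : K) :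
    ψ.rescale (single m k) = k • weight ψ.scale m • single (ψ.mapPM m) 1 := by
  have hk : single m k = k • MonoidAlgebra.basis (PM Q) K m := by
    rw [MonoidAlgebra.basis_apply, smul_single', mul_one]
  rw [hk, map_smul, rescale, Module.Basis.constr_basis]

theorem rescale_mkPath (v : Fin Q.nV) (l : List (Fin Q.nA)) :
    ψ.rescale (Q.mkPath K v l)
      = (l.map ψ.scale).prod • Q.mkPath K (ψ.vertex v) (l.map ψ.arrow) := by
  cases h : Q.walk v l with
  | none =>
    have h' : Q.walk (ψ.vertex v) (l.map ψ.arrow) = none := by rw [ψ.walk_map, h]; rfl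
    rw [mkPath_of_walk_eq_none h, mkPath_of_walk_eq_none h', map_zero, smul_zero]
  | some w =>
    have h' : Q.walk (ψ.vertex v) (l.map ψ.arrow) = some (ψ.vertex w) := by
      rw [ψ.walk_map, h]; rfl
    rw [mkPath_of_walk_eq_some h, mkPath_of_walk_eq_some h', rescale_single, one_smul]
    rfl

theorem weight_smul_cycDerWord (a : Fin Q.nA) (m : PM Q) :
    weight ψ.scale m • Q.cycDerWord K (ψ.arrow a) (ψ.mapPM m)
      = ψ.scale a • ψ.rescale (Q.cycDerWord K a m) := by
  cases m with
  | p x =>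
    obtain ⟨⟨_, l⟩, _⟩ := x
    have hget (i : ℕ) : (l.map ψ.arrow)[i]? = some (ψ.arrow a) ↔ l[i]? = some a := by
      simp [List.getElem?_map]
    simp only [weight, Aut.mapPM_p, Aut.mapPath, cycDerWord, List.length_map, Finset.smul_sum,
      map_sum, hget]
    refine Finset.sum_congr rfl fun i _ => ?_
    split_ifs with hi
    · rw [ψ.tgt_arrow, ← List.map_take, ← List.map_drop, ← List.map_append, rescale_mkPath,
        smul_smul, List.prod_map_eq_mul_prod_map_drop_append_take ψ.scale hi]
    · simp
  | _ => simp [cycDerWord]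

theorem cycDer_rescale (a : Fin Q.nA) (W : MonoidAlgebra K (PM Q)) :
    Q.cycDer K (ψ.arrow a) (ψ.rescale W) = ψ.scale a • ψ.rescale (Q.cycDer K a W) := by
  have hlin : (MonoidAlgebra.basis (PM Q) K).constr K (Q.cycDerWord K (ψ.arrow a)) ∘ₗ ψ.rescale
      = (ψ.scale a : K) •
        ψ.rescale ∘ₗ (MonoidAlgebra.basis (PM Q) K).constr K (Q.cycDerWord K a) := by
    refine (MonoidAlgebra.basis (PM Q) K).ext fun m => ?_
    rw [LinearMap.comp_apply, LinearMap.smul_apply, LinearMap.comp_apply, Module.Basis.constr_basis,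
      MonoidAlgebra.basis_apply, rescale_single, one_smul, LinearMap.map_smul_of_tower,
      ← MonoidAlgebra.basis_apply, Module.Basis.constr_basis, weight_smul_cycDerWord,
      Units.smul_def]
  simpa only [cycDer_eq_constr, Units.smul_def, LinearMap.comp_apply, LinearMap.smul_apply]
    using LinearMap.congr_fun hlin W

theorem symm_symm : ψ.symm.symm = ψ := by
  obtain ⟨⟨σ, τ, _, _⟩, c⟩ := ψ
  simp only [symm, Aut.symm, Equiv.symm_symm, mk.injEq, true_and]
  funext e
  simp

theorem symm_rescale_rescale (x : MonoidAlgebra K (PM Q)) : ψ.symm.rescale (ψ.rescale x) = x := by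
  suffices ψ.symm.rescale ∘ₗ ψ.rescale = LinearMap.id from LinearMap.congr_fun this x
  refine (MonoidAlgebra.basis (PM Q) K).ext fun m => ?_
  have hw : weight ψ.symm.scale (ψ.mapPM m) = (weight ψ.scale m)⁻¹ := by
    rw [Aut.weight_mapPM, ← weight_inv]
    congr 1
    funext e
    simp [symm]
  rw [LinearMap.comp_apply, LinearMap.id_apply, MonoidAlgebra.basis_apply, rescale_single,
    one_smul, LinearMap.map_smul_of_tower, rescale_single, one_smul, hw, smul_inv_smul]
  exact congrArg (single · 1) (ψ.toAut.symm_mapPM_mapPM m)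

theorem rescale_symm_rescale (x : MonoidAlgebra K (PM Q)) : ψ.rescale (ψ.symm.rescale x) = x := by
  simpa only [symm_symm] using ψ.symm.symm_rescale_rescale x

/-- `rescale` is multiplicative only up to multiples of the formal `0`, which `jacMk` kills. -/
noncomputable def toJacAlg (W : MonoidAlgebra K (PM Q)) :
    MonoidAlgebra K (PM Q) →ₐ[K] Q.JacAlg K W :=
  MonoidAlgebra.lift K (Q.JacAlg K W) (PM Q)
    { toFun m := Q.jacMk K W (ψ.rescale (single m 1))
      map_one' := by
        rw [rescale_single, one_smul, map_one ψ.mapPM, weight_one, one_smul, ← one_def, map_one]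
      map_mul' m n := by
        simp only [rescale_single, one_smul, Units.smul_def, map_smul]
        rw [smul_mul_smul_comm, ← map_mul, single_mul_single, one_mul, ← map_mul ψ.mapPM]
        by_cases h : m * n = .zero
        · rw [h, Aut.mapPM_zero, jacMk_single_zero, smul_zero, smul_zero]
        · rw [weight_mul _ h, Units.val_mul] }

theorem toJacAlg_apply (W x : MonoidAlgebra K (PM Q)) :
    ψ.toJacAlg W x = Q.jacMk K W (ψ.rescale x) := by
  suffices (ψ.toJacAlg W).toLinearMap = (Q.jacMk K W).toLinearMap ∘ₗ ψ.rescale from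
    LinearMap.congr_fun this x
  refine (MonoidAlgebra.basis (PM Q) K).ext fun m => ?_
  rw [MonoidAlgebra.basis_apply, AlgHom.toLinearMap_apply, toJacAlg, lift_single, one_smul]
  rfl

variable {ψ} {W W' : MonoidAlgebra K (PM Q)} {μ : Kˣ}

theorem toJacAlg_jacRel (h : ∀ a, Q.cycDer K a (ψ.rescale W) = μ • Q.cycDer K a W')
    ⦃x y : MonoidAlgebra K (PM Q)⦄ (hxy : Q.jacRel K W x y) :
    ψ.toJacAlg W' x = ψ.toJacAlg W' y := by
  cases hxy with
  | zero => rw [toJacAlg_apply, rescale_single, one_smul, AlgHom.map_smul_of_tower,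
      Aut.mapPM_zero, jacMk_single_zero, smul_zero, map_zero]
  | one =>
    rw [show (single .one 1 : MonoidAlgebra K (PM Q)) = 1 from rfl, map_one, map_sum,
      ← sum_jacMk_single_idPath W', ← ψ.vertex.sum_comp]
    refine Finset.sum_congr rfl fun v _ => ?_
    rw [toJacAlg_apply, rescale_single, one_smul]
    exact congrArg _ (one_smul Kˣ _).symm
  | der a =>
    rw [toJacAlg_apply, eq_inv_smul_iff.2 (ψ.cycDer_rescale a W).symm, h,
      AlgHom.map_smul_of_tower, AlgHom.map_smul_of_tower, jacMk_cycDer, smul_zero, smul_zero,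
      map_zero]

noncomputable def jacAlgHom (h : ∀ a, Q.cycDer K a (ψ.rescale W) = μ • Q.cycDer K a W') :
    Q.JacAlg K W →ₐ[K] Q.JacAlg K W' :=
  RingQuot.liftAlgHom K ⟨ψ.toJacAlg W', toJacAlg_jacRel h⟩

theorem jacAlgHom_jacMk (h : ∀ a, Q.cycDer K a (ψ.rescale W) = μ • Q.cycDer K a W')
    (x : MonoidAlgebra K (PM Q)) : jacAlgHom h (Q.jacMk K W x) = Q.jacMk K W' (ψ.rescale x) := by
  rw [jacAlgHom, jacMk, RingQuot.liftAlgHom_mkAlgHom_apply, toJacAlg_apply]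

theorem cycDer_symm_rescale (h : ∀ a, Q.cycDer K a (ψ.rescale W) = μ • Q.cycDer K a W')
    (a : Fin Q.nA) : Q.cycDer K a (ψ.symm.rescale W') = μ⁻¹ • Q.cycDer K a W := by
  have h' := ψ.symm.cycDer_rescale (ψ.arrow a) W'
  rw [eq_inv_smul_iff.2 (h (ψ.arrow a)).symm, ψ.cycDer_rescale, LinearMap.map_smul_of_tower,
    LinearMap.map_smul_of_tower, symm_rescale_rescale] at h'
  simpa [symm, Aut.symm, smul_comm (ψ.scale a)⁻¹ μ⁻¹] using h'

noncomputable def jacAlgEquiv (h : ∀ a, Q.cycDer K a (ψ.rescale W) = μ • Q.cycDer K a W') :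
    Q.JacAlg K W ≃ₐ[K] Q.JacAlg K W' :=
  AlgEquiv.ofAlgHom (jacAlgHom h) (jacAlgHom (cycDer_symm_rescale h))
    (RingQuot.ringQuot_ext' K _ _ <| AlgHom.ext fun x => by
      show jacAlgHom h (jacAlgHom _ (Q.jacMk K W' x)) = Q.jacMk K W' x
      rw [jacAlgHom_jacMk, jacAlgHom_jacMk, rescale_symm_rescale])
    (RingQuot.ringQuot_ext' K _ _ <| AlgHom.ext fun x => by
      show jacAlgHom _ (jacAlgHom h (Q.jacMk K W x)) = Q.jacMk K W x
      rw [jacAlgHom_jacMk, jacAlgHom_jacMk, symm_rescale_rescale])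

end RescaledAut

end FQuiver

def swapRowsQ2 : Q2.Aut where
  arrow := Function.Involutive.toPerm ![9, 10, 11, 4, 3, 6, 5, 8, 7, 0, 1, 2]
    (by unfold Function.Involutive; decide)
  vertex := Function.Involutive.toPerm ![3, 4, 5, 0, 1, 2] (by unfold Function.Involutive; decide)
  src_arrow := by decide
  tgt_arrow := by decide

/-- The scales make the image of every monomial of `W⁽²⁾_u` equal to minus the corresponding
monomial of `W⁽²⁾_{u⁻¹}`: e.g. `u·abc ↦ u·u⁻¹·jkl` and `−jkl ↦ −u⁻¹·abc`. -/
def rescaledSwapQ2 {K : Type} [Field K] (u : Kˣ) : Q2.RescaledAut K where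
  toAut := swapRowsQ2
  scale := ![1, u⁻¹, 1, 1, 1, 1, 1, u, 1, u⁻¹, 1, 1]

theorem cycDer_rescale_W2 {K : Type} [Field K] (u : Kˣ) (a : Fin 12) :
    Q2.cycDer K a ((rescaledSwapQ2 u).rescale (W2 K u))
      = (-1 : Kˣ) • Q2.cycDer K a (W2 K (u : K)⁻¹) := by
  -- the images of the cycles `jgh` and `afi` are rotations of the corresponding monomials of
  -- `W⁽²⁾_{u⁻¹}`, which are written from another starting vertex
  have hrot₁ :
      Q2.cycDer K a (Q2.mkPath K 3 [7, 6, 9]) = Q2.cycDer K a (Q2.mkPath K 2 [6, 9, 7]) := by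
    simpa using cycDer_mkPath_rotate (Q := Q2) (K := K) (v := 3) (e := 7) (l := [6, 9]) a
      (by decide)
  have hrot₂ :
      Q2.cycDer K a (Q2.mkPath K 0 [8, 5, 0]) = Q2.cycDer K a (Q2.mkPath K 5 [5, 0, 8]) := by
    simpa using cycDer_mkPath_rotate (Q := Q2) (K := K) (v := 0) (e := 8) (l := [5, 0]) a
      (by decide)
  simp only [W2, map_sub, map_add, map_smul, RescaledAut.rescale_mkPath]
  simp only [rescaledSwapQ2, swapRowsQ2, Fin.isValue, List.map_cons, Matrix.cons_val,
    Matrix.cons_val_one, Matrix.cons_val_zero, List.map_nil, List.prod_cons, List.prod_nil, mul_one,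
    one_mul, Function.Involutive.coe_toPerm, Units.smul_def, Units.val_inv_eq_inv_val,
    smul_inv_smul₀ u.ne_zero, one_smul, inv_mul_cancel, mul_inv_cancel, Units.val_neg,
    Units.val_one, neg_smul]
  simp only [cycDer_eq_constr, map_add, map_sub, map_smul] at hrot₁ hrot₂ ⊢
  rw [hrot₁, hrot₂]
  module

theorem jacAlg2_iso_inv_param_general (K : Type) [Field K] (lam : K)
    (h0 : lam ≠ 0) :
    Nonempty (Q2.JacAlg K (W2 K lam) ≃ₐ[K] Q2.JacAlg K (W2 K lam⁻¹)) :=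
  ⟨(rescaledSwapQ2 (Units.mk0 lam h0)).jacAlgEquiv (cycDer_rescale_W2 (Units.mk0 lam h0))⟩

/-- There is a `K`-algebra isomorphism
`KQ⁽²⁾/J′(W⁽²⁾_λ) ≅ KQ⁽²⁾/J′(W⁽²⁾_{λ⁻¹})`. -/
theorem jacAlg2_iso_inv_param (K : Type) [Field K] (lam : K)
    (h0 : lam ≠ 0) (h1 : lam ≠ 1) :
    Nonempty (Q2.JacAlg K (W2 K lam) ≃ₐ[K] Q2.JacAlg K (W2 K lam⁻¹)) :=
  jacAlg2_iso_inv_param_general K lam h0
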